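/- Let $(X,\mu)$ be a measure space, $K : X \times X \to [0,\infty)$ measurable, $1 < p < \infty$ with conjugate exponent $q$ (i.e. $1/p + 1/q = 1$). Suppose there is a constant $C > 0$ and a measurable positive function $h$ on $X$ such that $\int_X K(x,y) h(y)^q \, d\mu(y) \le C h(x)^q$ for a.e. $x$ and $\int_X K(x,y) h(x)^p \, d\mu(x) \le C h(y)^p$ for a.e. $y$. Then the integral operator $Tf(x) = \int_X K(x,y) f(y) \, d\mu(y)$ is bounded on $L^p(X,\mu)$ with operator norm at most $C$. -/

import Mathlib

/-!
Split `K f = K^{1/p} (f / h) · K^{1/q} h` and apply Hölder in `y`: by the first Schur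
hypothesis, `|T f x|^p ≤ C^{p/q} h(x)^p ∫ K(x,y) (|f y| / h y)^p dy`. Integrating in `x` and
swapping the integrals (Tonelli), the second hypothesis bounds the right-hand side by
`C^{p/q} · C ∫ |f|^p = C^p ‖f‖_p^p`. Everything is done in `ℝ≥0∞`, so no integrability
assumptions are needed along the way.
-/

open MeasureTheory

open scoped ENNReal

namespace ENNReal

theorem ofReal_mul_rpow_of_pos {b : ℝ} (a : ℝ) (hb : 0 < b) (r : ℝ) :
    ENNReal.ofReal (a * b ^ r) = ENNReal.ofReal a * ENNReal.ofReal b ^ r := by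
  rw [ENNReal.ofReal_mul' (by positivity), ENNReal.ofReal_rpow_of_pos hb]

theorem rpow_div_conj_mul_self {p q : ℝ} (hpq : p.HolderConjugate q) (c : ℝ≥0∞) :
    c ^ (p / q) * c = c ^ p := by
  conv_rhs => rw [← sub_add_cancel p 1, ← hpq.div_conj_eq_sub_one]
  rw [rpow_add_of_nonneg _ _ (div_pos hpq.pos hpq.symm.pos).le zero_le_one, rpow_one]

theorem rpow_one_div_mul_rpow_one_div_rpow {p q : ℝ} (hp : 0 < p) (a b : ℝ≥0∞) :
    (a ^ (1 / p) * b ^ (1 / q)) ^ p = a * b ^ (p / q) := by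
  rw [mul_rpow_of_nonneg _ _ hp.le, ← rpow_mul, ← rpow_mul, one_div_mul_cancel hp.ne', rpow_one,
    one_div_mul_eq_div]

variable {α : Type*} [MeasurableSpace α] {μ : Measure α}

theorem lintegral_weighted_mul_le_Lp_mul_Lq {p q : ℝ} (hpq : p.HolderConjugate q)
    {w f g : α → ℝ≥0∞} (hw : AEMeasurable w μ) (hf : AEMeasurable f μ) (hg : AEMeasurable g μ) :
    ∫⁻ a, w a * (f a * g a) ∂μ ≤
      (∫⁻ a, w a * f a ^ p ∂μ) ^ (1 / p) * (∫⁻ a, w a * g a ^ q ∂μ) ^ (1 / q) := by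
  have hac := withDensity_absolutelyContinuous μ w
  have := lintegral_mul_le_Lp_mul_Lq (μ.withDensity w) hpq (hf.mono' hac) (hg.mono' hac)
  rwa [lintegral_withDensity_eq_lintegral_mul₀ hw (hf.mul hg),
    lintegral_withDensity_eq_lintegral_mul₀ hw (hf.pow_const p),
    lintegral_withDensity_eq_lintegral_mul₀ hw (hg.pow_const q)] at this

/-- Hölder's inequality for the weight `w`, applied to `F = (F / H) * H`. -/
theorem lintegral_weighted_rpow_le {p q : ℝ} (hpq : p.HolderConjugate q)
    {w F H : α → ℝ≥0∞} (hw : AEMeasurable w μ) (hF : AEMeasurable F μ) (hH : AEMeasurable H μ)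
    (hH0 : ∀ a, H a ≠ 0) (hHtop : ∀ a, H a ≠ ∞) :
    (∫⁻ a, w a * F a ∂μ) ^ p ≤
      (∫⁻ a, w a * (F a / H a) ^ p ∂μ) * (∫⁻ a, w a * H a ^ q ∂μ) ^ (p / q) := by
  have holder := lintegral_weighted_mul_le_Lp_mul_Lq hpq hw (hF.div hH) hH
  simp only [Pi.div_apply, ENNReal.div_mul_cancel (hH0 _) (hHtop _)] at holder
  rw [← rpow_one_div_mul_rpow_one_div_rpow hpq.pos]
  exact rpow_le_rpow holder hpq.nonneg

end ENNReal

theorem enorm_integral_kernel_mul_le {X Y : Type*} [MeasurableSpace Y] {ν : Measure Y}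
    {K : X × Y → ℝ} (hK : ∀ x y, 0 ≤ K (x, y)) (f : Y → ℝ)
    (x : X) : ‖∫ y, K (x, y) * f y ∂ν‖ₑ ≤ ∫⁻ y, ENNReal.ofReal (K (x, y)) * ‖f y‖ₑ ∂ν := by
  refine (enorm_integral_le_lintegral_enorm _).trans_eq (lintegral_congr fun y => ?_)
  rw [enorm_mul, Real.enorm_eq_ofReal (hK x y)]

section

variable {X Y : Type*} [MeasurableSpace X] [MeasurableSpace Y] {μ : Measure X} {ν : Measure Y}

theorem lintegral_mul_lintegral_kernel_comm [SFinite μ] [SFinite ν] {k : X × Y → ℝ≥0∞}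
    (hk : Measurable k) {a : X → ℝ≥0∞} {b : Y → ℝ≥0∞} (ha : AEMeasurable a μ)
    (hb : AEMeasurable b ν) :
    ∫⁻ x, a x * ∫⁻ y, k (x, y) * b y ∂ν ∂μ = ∫⁻ y, b y * ∫⁻ x, k (x, y) * a x ∂μ ∂ν := by
  calc ∫⁻ x, a x * ∫⁻ y, k (x, y) * b y ∂ν ∂μ
      = ∫⁻ x, ∫⁻ y, a x * (k (x, y) * b y) ∂ν ∂μ := by
        refine lintegral_congr fun x => (lintegral_const_mul'' _ ?_).symm
        exact (hk.comp measurable_prodMk_left).aemeasurable.mul hb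
    _ = ∫⁻ y, ∫⁻ x, a x * (k (x, y) * b y) ∂μ ∂ν :=
        lintegral_lintegral_swap (ha.comp_fst.mul (hk.aemeasurable.mul hb.comp_snd))
    _ = ∫⁻ y, b y * ∫⁻ x, k (x, y) * a x ∂μ ∂ν := by
        refine lintegral_congr fun y => ?_
        rw [← lintegral_const_mul'' (f := fun x => k (x, y) * a x) _
          ((hk.comp measurable_prodMk_right).aemeasurable.mul ha)]
        exact lintegral_congr fun x => by ring

theorem lintegral_rpow_lintegral_kernel_le [SFinite μ] {k : X × X → ℝ≥0∞} (hk : Measurable k)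
    {p q : ℝ} (hpq : p.HolderConjugate q) {c : ℝ≥0∞} {H : X → ℝ≥0∞} (hH : Measurable H)
    (hH0 : ∀ x, H x ≠ 0) (hHtop : ∀ x, H x ≠ ∞)
    (h1 : ∀ᵐ x ∂μ, ∫⁻ y, k (x, y) * H y ^ q ∂μ ≤ c * H x ^ q)
    (h2 : ∀ᵐ y ∂μ, ∫⁻ x, k (x, y) * H x ^ p ∂μ ≤ c * H y ^ p)
    {F : X → ℝ≥0∞} (hF : AEMeasurable F μ) :
    ∫⁻ x, (∫⁻ y, k (x, y) * F y ∂μ) ^ p ∂μ ≤ c ^ p * ∫⁻ y, F y ^ p ∂μ := by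
  have hp := hpq.pos
  set G : X → ℝ≥0∞ := fun y => (F y / H y) ^ p
  have hG : AEMeasurable G μ := (hF.div hH.aemeasurable).pow_const p
  have pointwise : ∀ᵐ x ∂μ, (∫⁻ y, k (x, y) * F y ∂μ) ^ p ≤
      c ^ (p / q) * (H x ^ p * ∫⁻ y, k (x, y) * G y ∂μ) := by
    filter_upwards [h1] with x hx
    calc (∫⁻ y, k (x, y) * F y ∂μ) ^ p
        ≤ (∫⁻ y, k (x, y) * G y ∂μ) * (c * H x ^ q) ^ (p / q) := by
          grw [ENNReal.lintegral_weighted_rpow_le (w := fun y => k (x, y)) hpq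
            (hk.comp measurable_prodMk_left).aemeasurable hF hH.aemeasurable hH0 hHtop, hx]
          exact (div_pos hp hpq.symm.pos).le
      _ = c ^ (p / q) * (H x ^ p * ∫⁻ y, k (x, y) * G y ∂μ) := by
          rw [ENNReal.mul_rpow_of_nonneg _ _ (div_pos hp hpq.symm.pos).le, ← ENNReal.rpow_mul,
            mul_div_cancel₀ _ hpq.symm.pos.ne']
          ring
  have hGH : ∀ y, G y * (c * H y ^ p) = c * F y ^ p := fun y => by
    rw [← ENNReal.div_mul_cancel (hH0 y) (hHtop y) (b := F y), ENNReal.mul_rpow_of_nonneg _ _ hp.le]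
    ring
  calc ∫⁻ x, (∫⁻ y, k (x, y) * F y ∂μ) ^ p ∂μ
      ≤ ∫⁻ x, c ^ (p / q) * (H x ^ p * ∫⁻ y, k (x, y) * G y ∂μ) ∂μ :=
        lintegral_mono_ae pointwise
    _ = c ^ (p / q) * ∫⁻ y, G y * ∫⁻ x, k (x, y) * H x ^ p ∂μ ∂μ := by
        rw [lintegral_const_mul'' (f := fun x => H x ^ p * ∫⁻ y, k (x, y) * G y ∂μ) _
          ((hH.pow_const p).aemeasurable.mul
            (hk.aemeasurable.mul hG.comp_snd).lintegral_prod_right'),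
          lintegral_mul_lintegral_kernel_comm hk (hH.pow_const p).aemeasurable hG]
    _ ≤ c ^ (p / q) * ∫⁻ y, G y * (c * H y ^ p) ∂μ := by
        gcongr 1
        exact lintegral_mono_ae (h2.mono fun y hy => by gcongr)
    _ = c ^ p * ∫⁻ y, F y ^ p ∂μ := by
        simp only [hGH]
        rw [lintegral_const_mul'' _ (hF.pow_const p), ← mul_assoc,
          ENNReal.rpow_div_conj_mul_self hpq]

theorem eLpNorm_le_mul_eLpNorm_of_lintegral_rpow_le {E F : Type*} [NormedAddCommGroup E]
    [NormedAddCommGroup F] {f : X → E} {g : X → F} {p : ℝ} (hp : 0 < p) {c : ℝ≥0∞}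
    (h : ∫⁻ x, ‖g x‖ₑ ^ p ∂μ ≤ c ^ p * ∫⁻ x, ‖f x‖ₑ ^ p ∂μ) :
    eLpNorm g (ENNReal.ofReal p) μ ≤ c * eLpNorm f (ENNReal.ofReal p) μ := by
  have hp0 : ENNReal.ofReal p ≠ 0 := (ENNReal.ofReal_pos.2 hp).ne'
  rw [eLpNorm_eq_lintegral_rpow_enorm_toReal hp0 ENNReal.ofReal_ne_top,
    eLpNorm_eq_lintegral_rpow_enorm_toReal hp0 ENNReal.ofReal_ne_top, ENNReal.toReal_ofReal hp.le]
  calc (∫⁻ x, ‖g x‖ₑ ^ p ∂μ) ^ (1 / p)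
      ≤ (c ^ p * ∫⁻ x, ‖f x‖ₑ ^ p ∂μ) ^ (1 / p) := by gcongr
    _ = c * (∫⁻ x, ‖f x‖ₑ ^ p ∂μ) ^ (1 / p) := by
        rw [ENNReal.mul_rpow_of_nonneg _ _ (by positivity), ← ENNReal.rpow_mul,
          mul_one_div_cancel hp.ne', ENNReal.rpow_one]

end

theorem stmt_0_general {X : Type*} [MeasurableSpace X] (μ : Measure X) [SigmaFinite μ]
    (K : X × X → ℝ) (hKmeas : Measurable K) (hKnonneg : ∀ x y, 0 ≤ K (x, y))
    (p q : ℝ) (hp : 1 < p) (hpq : 1 / p + 1 / q = 1)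
    (C : ℝ) (h : X → ℝ) (hmeas : Measurable h) (hpos : ∀ x, 0 < h x)
    (hSchur1 : ∀ᵐ x ∂μ, ∫⁻ y, ENNReal.ofReal (K (x, y) * h y ^ q) ∂μ ≤
      ENNReal.ofReal (C * h x ^ q))
    (hSchur2 : ∀ᵐ y ∂μ, ∫⁻ x, ENNReal.ofReal (K (x, y) * h x ^ p) ∂μ ≤
      ENNReal.ofReal (C * h y ^ p)) :
    ∀ f : X → ℝ, MemLp f (ENNReal.ofReal p) μ →
      MemLp (fun x => ∫ y, K (x, y) * f y ∂μ) (ENNReal.ofReal p) μ ∧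
      eLpNorm (fun x => ∫ y, K (x, y) * f y ∂μ) (ENNReal.ofReal p) μ ≤
        ENNReal.ofReal C * eLpNorm f (ENNReal.ofReal p) μ := by
  intro f hf
  have hpq : p.HolderConjugate q :=
    Real.holderConjugate_iff.2 ⟨hp, by simpa only [one_div] using hpq⟩
  simp only [ENNReal.ofReal_mul_rpow_of_pos _ (hpos _)] at hSchur1 hSchur2
  have hbound := lintegral_rpow_lintegral_kernel_le hKmeas.ennreal_ofReal hpq
    hmeas.ennreal_ofReal (fun x => (ENNReal.ofReal_pos.2 (hpos x)).ne')
    (fun _ => ENNReal.ofReal_ne_top) hSchur1 hSchur2 hf.1.enorm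
  have hnorm := eLpNorm_le_mul_eLpNorm_of_lintegral_rpow_le hpq.pos <|
    (lintegral_mono fun x => ENNReal.rpow_le_rpow (enorm_integral_kernel_mul_le hKnonneg f x)
      hpq.nonneg).trans hbound
  refine ⟨⟨?_, hnorm.trans_lt (ENNReal.mul_lt_top ENNReal.ofReal_lt_top hf.eLpNorm_lt_top)⟩, hnorm⟩
  exact (hKmeas.aestronglyMeasurable.mul hf.1.comp_snd).integral_prod_right'

/-- Schur test: if the nonnegative kernel `K` satisfies the two weighted estimates
with weight `h` and constant `C`, then the integral operator `f ↦ ∫ K (x, y) f y dy`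
is bounded on `L^p` with norm at most `C`. -/
theorem stmt_0 {X : Type*} [MeasurableSpace X] (μ : Measure X) [SigmaFinite μ]
    (K : X × X → ℝ) (hKmeas : Measurable K) (hKnonneg : ∀ x y, 0 ≤ K (x, y))
    (p q : ℝ) (hp : 1 < p) (hq : 1 < q) (hpq : 1 / p + 1 / q = 1)
    (C : ℝ) (hC : 0 < C) (h : X → ℝ) (hmeas : Measurable h) (hpos : ∀ x, 0 < h x)
    (hSchur1 : ∀ᵐ x ∂μ, ∫⁻ y, ENNReal.ofReal (K (x, y) * h y ^ q) ∂μ ≤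
      ENNReal.ofReal (C * h x ^ q))
    (hSchur2 : ∀ᵐ y ∂μ, ∫⁻ x, ENNReal.ofReal (K (x, y) * h x ^ p) ∂μ ≤
      ENNReal.ofReal (C * h y ^ p)) :
    ∀ f : X → ℝ, MemLp f (ENNReal.ofReal p) μ →
      MemLp (fun x => ∫ y, K (x, y) * f y ∂μ) (ENNReal.ofReal p) μ ∧
      eLpNorm (fun x => ∫ y, K (x, y) * f y ∂μ) (ENNReal.ofReal p) μ ≤
        ENNReal.ofReal C * eLpNorm f (ENNReal.ofReal p) μ :=
  stmt_0_general μ K hKmeas hKnonneg p q hp hpq C h hmeas hpos hSchur1 hSchur2
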